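/- For every nonzero v = (v₁, v₂) ∈ ℝ × ℝ^q and every t ≥ 0, the point γ₀(v, t) satisfies N(γ₀(v, t)) = ‖v‖·t; in particular the curve t ↦ γ₀(v, t) is a constant-speed ray from the origin. -/

import Mathlib

/-!
Writing `v = ‖v‖ (u, w)` with `u² + ‖w‖² = 1`, the ray is `(-log D, sinh s • w)` with `s = ‖v‖ t`
and `D = cosh s - u sinh s > 0`. Then `e^{-Υ₁} = D`, `e^{Υ₁} = D⁻¹`, and the identity
`D² + 1 + sinh² s ‖w‖² = 2 D cosh s` turns the argument of `arccosh` in `N` into `cosh s`.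
-/

/-- The inverse hyperbolic cosine, `arccosh x = log (x + √(x² − 1))`
(the inverse of `cosh` on `[0, ∞)` for `x ≥ 1`). -/
noncomputable def arccosh (x : ℝ) : ℝ :=
  Real.log (x + Real.sqrt (x ^ 2 - 1))

/-- The solvable group operation on `ℝ × ℝ^q`:
`Ψ * Υ = (Υ₁ + Ψ₁, Υ₂ + e^{−Υ₁}·Ψ₂)`. -/
noncomputable def gmul {q : ℕ} (Ψ Υ : ℝ × EuclideanSpace ℝ (Fin q)) :
    ℝ × EuclideanSpace ℝ (Fin q) :=
  (Υ.1 + Ψ.1, Υ.2 + Real.exp (-Υ.1) • Ψ.2)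

/-- The group inverse `Υ⁻¹ = (−Υ₁, −e^{Υ₁}·Υ₂)`. -/
noncomputable def ginv {q : ℕ} (Υ : ℝ × EuclideanSpace ℝ (Fin q)) :
    ℝ × EuclideanSpace ℝ (Fin q) :=
  (-Υ.1, -(Real.exp Υ.1 • Υ.2))

/-- The norm `N(Υ) = arccosh((e^{−Υ₁} + e^{Υ₁}(1 + ‖Υ₂‖²))/2)`. -/
noncomputable def Nnorm {q : ℕ} (Υ : ℝ × EuclideanSpace ℝ (Fin q)) : ℝ :=
  arccosh ((Real.exp (-Υ.1) + Real.exp Υ.1 * (1 + ‖Υ.2‖ ^ 2)) / 2)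

/-- The distance `d(Υ, Ψ) = N(Ψ⁻¹ * Υ)`. -/
noncomputable def gdist {q : ℕ} (Υ Ψ : ℝ × EuclideanSpace ℝ (Fin q)) : ℝ :=
  Nnorm (gmul (ginv Ψ) Υ)

/-- The Euclidean norm on `ℝ × ℝ^q`: `‖v‖ = (v₁² + ‖v₂‖²)^{1/2}`. -/
noncomputable def nrm {q : ℕ} (v : ℝ × EuclideanSpace ℝ (Fin q)) : ℝ :=
  Real.sqrt (v.1 ^ 2 + ‖v.2‖ ^ 2)

/-- The geodesic ray from the origin with initial velocity `v`:
`γ₀(v, t) = (−log(cosh(‖v‖t) − (v₁/‖v‖)·sinh(‖v‖t)), (v₂/‖v‖)·sinh(‖v‖t))`. -/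
noncomputable def geo {q : ℕ} (v : ℝ × EuclideanSpace ℝ (Fin q)) (t : ℝ) :
    ℝ × EuclideanSpace ℝ (Fin q) :=
  (-Real.log (Real.cosh (nrm v * t) - v.1 / nrm v * Real.sinh (nrm v * t)),
    (Real.sinh (nrm v * t) / nrm v) • v.2)

open Real

lemma arccosh_eq_arcosh : arccosh = Real.arcosh := rfl

lemma cosh_sub_mul_sinh_pos {u : ℝ} (hu : u ^ 2 ≤ 1) (s : ℝ) : 0 < cosh s - u * sinh s := by
  have h_prod : 1 ≤ (cosh s - u * sinh s) * (cosh s + u * sinh s) := by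
    nlinarith [cosh_sq s, sq_nonneg (sinh s)]
  nlinarith [cosh_pos s]

lemma Nnorm_neg_log {q : ℕ} {D : ℝ} (hD : 0 < D) (x : EuclideanSpace ℝ (Fin q)) :
    Nnorm (-log D, x) = arccosh ((D + (1 + ‖x‖ ^ 2) / D) / 2) := by
  rw [Nnorm, neg_neg, exp_log hD, exp_neg, exp_log hD, inv_mul_eq_div]

theorem Nnorm_unit_ray {q : ℕ} {u : ℝ} {w : EuclideanSpace ℝ (Fin q)} (huw : u ^ 2 + ‖w‖ ^ 2 = 1)
    {s : ℝ} (hs : 0 ≤ s) : Nnorm (-log (cosh s - u * sinh s), sinh s • w) = s := by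
  have hD := cosh_sub_mul_sinh_pos (u := u) (by nlinarith [sq_nonneg ‖w‖]) s
  have h_arg : (cosh s - u * sinh s + (1 + ‖sinh s • w‖ ^ 2) / (cosh s - u * sinh s)) / 2
      = cosh s := by
    rw [norm_smul, norm_eq_abs, mul_pow, sq_abs]
    field_simp
    linear_combination sinh s ^ 2 * huw - cosh_sq s
  rw [Nnorm_neg_log hD, h_arg, arccosh_eq_arcosh, arcosh_cosh hs]

lemma nrm_pos {q : ℕ} {v : ℝ × EuclideanSpace ℝ (Fin q)} (hv : v ≠ 0) : 0 < nrm v := by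
  have h_ne : v.1 ≠ 0 ∨ v.2 ≠ 0 := by
    by_contra! h
    exact hv (Prod.ext h.1 h.2)
  refine sqrt_pos.mpr ?_
  rcases h_ne with h | h
  · positivity
  · have := norm_pos_iff.mpr h
    positivity

lemma nrm_sq {q : ℕ} (v : ℝ × EuclideanSpace ℝ (Fin q)) : nrm v ^ 2 = v.1 ^ 2 + ‖v.2‖ ^ 2 :=
  sq_sqrt (by positivity)

lemma geo_eq_unit_ray {q : ℕ} (v : ℝ × EuclideanSpace ℝ (Fin q)) (t : ℝ) :
    geo v t = (-log (cosh (nrm v * t) - v.1 / nrm v * sinh (nrm v * t)),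
      sinh (nrm v * t) • (nrm v)⁻¹ • v.2) := by
  rw [geo, smul_smul, ← div_eq_mul_inv]

lemma div_nrm_sq_add_norm_inv_nrm_smul_sq {q : ℕ} {v : ℝ × EuclideanSpace ℝ (Fin q)} (hv : v ≠ 0) :
    (v.1 / nrm v) ^ 2 + ‖(nrm v)⁻¹ • v.2‖ ^ 2 = 1 := by
  have hr := nrm_pos hv
  rw [norm_smul, norm_inv, norm_eq_abs, abs_of_pos hr]
  field_simp
  linear_combination -(nrm_sq v)

theorem stmt_14_general (q : ℕ)
    (v : ℝ × EuclideanSpace ℝ (Fin q)) (hv : v ≠ 0) (t : ℝ) (ht : 0 ≤ t) :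
    Nnorm (geo v t) = nrm v * t := by
  rw [geo_eq_unit_ray]
  exact Nnorm_unit_ray (div_nrm_sq_add_norm_inv_nrm_smul_sq hv) (mul_nonneg (nrm_pos hv).le ht)

/-- For every nonzero `v ∈ ℝ × ℝ^q` and every `t ≥ 0`, the point `γ₀(v, t)`
satisfies `N(γ₀(v, t)) = ‖v‖·t`: the curve `t ↦ γ₀(v, t)` is a constant-speed
ray from the origin. -/
theorem stmt_14 (q : ℕ) (hq : 1 ≤ q)
    (v : ℝ × EuclideanSpace ℝ (Fin q)) (hv : v ≠ 0) (t : ℝ) (ht : 0 ≤ t) :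
    Nnorm (geo v t) = nrm v * t :=
  stmt_14_general q v hv t ht
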